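/- Suppose N_E, D_E ∈ ℂ[z] are coprime polynomials with D_E(0) ≠ 0. Then the polynomials N_f = z·B_n^{♯n}·N_E + A_n·D_E and D_f = z·A_n^{♯n}·N_E + B_n·D_E have no common zero in ℂ; equivalently, N_f and D_f are coprime in ℂ[z]. In particular N_f/D_f is a coprime representation of the image of E = N_E/D_E under the Schur-algorithm linear fractional transformation. -/

import Mathlib

open Polynomial

/-- The pair `(A_j, B_j)` of polynomials from the recursion (1.8a):
`A_0 = γ_n`, `B_0 = 1`, `A_{j+1}(z) = z·A_j(z) + γ_{n-j-1}·B_j(z)`,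
`B_{j+1}(z) = z·conj(γ_{n-j-1})·A_j(z) + B_j(z)`. -/
noncomputable def schurAB (γ : ℕ → ℂ) (n : ℕ) : ℕ → Polynomial ℂ × Polynomial ℂ
  | 0 => (C (γ n), 1)
  | j + 1 =>
      (X * (schurAB γ n j).1 + C (γ (n - j - 1)) * (schurAB γ n j).2,
       X * C (starRingEnd ℂ (γ (n - j - 1))) * (schurAB γ n j).1 + (schurAB γ n j).2)

/-- The reflection `P^{♯k}`: the coefficient of `z^j` is `conj` of the coefficient of
`z^{k-j}` of `P`, i.e. `P^{♯k}(z) = z^k · conj(P(1/conj z))` for `P` of degree ≤ k. -/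
noncomputable def sharp (k : ℕ) (P : Polynomial ℂ) : Polynomial ℂ :=
  ∑ j ∈ Finset.range (k + 1), C (starRingEnd ℂ (P.coeff (k - j))) * X ^ j

/-!
`(N_f, D_f)` is the image of `(N_E, D_E)` under the polynomial matrix `!![z B♯, A; z A♯, B]`,
whose determinant is `z (B B♯ - A A♯) = d z^{n+1}` with `d = ∏ (1 - |γ_i|²) ≠ 0`. Since `N_E, D_E`
are coprime, the adjugate puts `z^{n+1}` in the ideal `(N_f, D_f)`; and `z` is coprime to `D_f`
because `D_f(0) = D_E(0) ≠ 0`, so that ideal is the unit ideal.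
-/

/-- The adjugate of `!![a, b; c, e]` puts `(a * e - b * c) * x` and `(a * e - b * c) * y`, hence
the determinant itself, in the ideal spanned by the two image entries. -/
theorem IsCoprime.add_mul_of_isCoprime_det {R : Type*} [CommRing R] {x y a b c e : R}
    (hxy : IsCoprime x y) (hdet : IsCoprime (a * e - b * c) (c * x + e * y)) :
    IsCoprime (a * x + b * y) (c * x + e * y) := by
  obtain ⟨p, q, hpq⟩ := hxy
  obtain ⟨u, v, huv⟩ := hdet
  refine ⟨u * (e * p - c * q), u * (a * q - b * p) + v, ?_⟩
  linear_combination (a * e - b * c) * u * hpq + huv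

theorem Polynomial.isCoprime_X_of_eval_zero_ne_zero {K : Type*} [Field K] {p : K[X]}
    (hp : p.eval 0 ≠ 0) : IsCoprime X p := by
  rwa [irreducible_X.coprime_iff_not_dvd, X_dvd_iff, coeff_zero_eq_eval_zero]

theorem IsCoprime.not_eval_eq_zero_and_eval_eq_zero {R : Type*} [CommRing R] [Nontrivial R]
    {p q : R[X]} (h : IsCoprime p q) (z : R) : ¬(p.eval z = 0 ∧ q.eval z = 0) := by
  rintro ⟨hp, hq⟩
  have := h.map (evalRingHom z)
  rw [coe_evalRingHom, hp, hq] at this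
  exact not_isCoprime_zero_zero this

section Sharp

theorem sharp_add (k : ℕ) (P Q : ℂ[X]) : sharp k (P + Q) = sharp k P + sharp k Q := by
  simp [sharp, add_mul, Finset.sum_add_distrib]

theorem sharp_C_mul (k : ℕ) (c : ℂ) (P : ℂ[X]) :
    sharp k (C c * P) = C (starRingEnd ℂ c) * sharp k P := by
  simp [sharp, Finset.mul_sum, mul_assoc]

theorem sharp_zero (P : ℂ[X]) : sharp 0 P = C (starRingEnd ℂ (P.coeff 0)) := by
  simp [sharp]

theorem sharp_succ (k : ℕ) (P : ℂ[X]) :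
    sharp (k + 1) P = C (starRingEnd ℂ (P.coeff (k + 1))) + X * sharp k P := by
  rw [sharp, sharp, Finset.sum_range_succ', Finset.mul_sum, add_comm]
  simp [pow_succ', mul_left_comm]

theorem sharp_succ_X_mul (k : ℕ) (P : ℂ[X]) : sharp (k + 1) (X * P) = sharp k P := by
  rw [sharp, sharp, Finset.sum_range_succ, Nat.sub_self, coeff_X_mul_zero, map_zero, C_0,
    zero_mul, add_zero]
  refine Finset.sum_congr rfl fun j hj => ?_
  rw [Nat.succ_sub (Finset.mem_range_succ_iff.mp hj), coeff_X_mul]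

end Sharp

section SchurAB

variable (γ : ℕ → ℂ) (n : ℕ)

theorem natDegree_schurAB_le (j : ℕ) :
    (schurAB γ n j).1.natDegree ≤ j ∧ (schurAB γ n j).2.natDegree ≤ j := by
  induction j with
  | zero => simp [schurAB]
  | succ j ih =>
    simp only [schurAB]
    constructor <;> compute_degree <;> omega

theorem schurAB_snd_coeff_succ (j : ℕ) : (schurAB γ n j).2.coeff (j + 1) = 0 :=
  coeff_eq_zero_of_natDegree_lt (Nat.lt_succ_of_le (natDegree_schurAB_le γ n j).2)

theorem schurAB_snd_eval_zero (j : ℕ) : (schurAB γ n j).2.eval 0 = 1 := by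
  induction j with
  | zero => simp [schurAB]
  | succ j ih => simp [schurAB, ih]

theorem sharp_schurAB_fst_succ (j : ℕ) :
    sharp (j + 1) (schurAB γ n (j + 1)).1 =
      sharp j (schurAB γ n j).1 +
        C (starRingEnd ℂ (γ (n - j - 1))) * X * sharp j (schurAB γ n j).2 := by
  rw [schurAB, sharp_add, sharp_succ_X_mul, sharp_C_mul, sharp_succ, schurAB_snd_coeff_succ]
  simp [mul_assoc]

theorem sharp_schurAB_snd_succ (j : ℕ) :
    sharp (j + 1) (schurAB γ n (j + 1)).2 =
      C (γ (n - j - 1)) * sharp j (schurAB γ n j).1 + X * sharp j (schurAB γ n j).2 := by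
  rw [schurAB, mul_assoc, sharp_add, sharp_succ_X_mul, sharp_C_mul, sharp_succ,
    schurAB_snd_coeff_succ]
  simp

theorem schurAB_det (j : ℕ) :
    (schurAB γ n j).2 * sharp j (schurAB γ n j).2 -
        (schurAB γ n j).1 * sharp j (schurAB γ n j).1 =
      C (∏ i ∈ Finset.range (j + 1), (1 - γ (n - i) * starRingEnd ℂ (γ (n - i)))) *
        X ^ j := by
  induction j with
  | zero => simp [schurAB, sharp_zero]
  | succ j ih =>
    rw [sharp_schurAB_fst_succ, sharp_schurAB_snd_succ, Finset.prod_range_succ, C_mul, pow_succ]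
    simp only [schurAB, show n - (j + 1) = n - j - 1 by omega, C_sub, C_1, C_mul]
    linear_combination (1 - C (γ (n - j - 1)) * C (starRingEnd ℂ (γ (n - j - 1)))) * X * ih

end SchurAB

theorem prod_one_sub_mul_conj_ne_zero {ι : Type*} (s : Finset ι) (w : ι → ℂ)
    (hw : ∀ i ∈ s, ‖w i‖ < 1) : ∏ i ∈ s, (1 - w i * starRingEnd ℂ (w i)) ≠ 0 := by
  refine Finset.prod_ne_zero_iff.mpr fun i hi => ?_
  rw [Complex.mul_conj, Complex.normSq_eq_norm_sq, sub_ne_zero]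
  norm_cast
  nlinarith [hw i hi, norm_nonneg (w i)]

theorem stmt_7_general (n : ℕ) (γ : ℕ → ℂ)
    (hγ : ∀ j ≤ n, ‖γ j‖ < 1)
    (NE DE : Polynomial ℂ) (hcop : IsCoprime NE DE) (hDE0 : DE.eval 0 ≠ 0) :
    (∀ z : ℂ, ¬((X * sharp n (schurAB γ n n).2 * NE + (schurAB γ n n).1 * DE).eval z = 0 ∧
        (X * sharp n (schurAB γ n n).1 * NE + (schurAB γ n n).2 * DE).eval z = 0)) ∧
    IsCoprime (X * sharp n (schurAB γ n n).2 * NE + (schurAB γ n n).1 * DE)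
      (X * sharp n (schurAB γ n n).1 * NE + (schurAB γ n n).2 * DE) := by
  set A := (schurAB γ n n).1
  set B := (schurAB γ n n).2
  set d := ∏ i ∈ Finset.range (n + 1), (1 - γ (n - i) * starRingEnd ℂ (γ (n - i)))
  have hd : d ≠ 0 := prod_one_sub_mul_conj_ne_zero _ _ fun i _ => hγ _ (Nat.sub_le n i)
  have hdet : X * sharp n B * B - A * (X * sharp n A) = C d * X ^ (n + 1) := by
    linear_combination X * schurAB_det γ n n
  have hD0 : (X * sharp n A * NE + B * DE).eval 0 ≠ 0 := by
    simpa [B, schurAB_snd_eval_zero] using hDE0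
  have hcopf : IsCoprime (X * sharp n B * NE + A * DE) (X * sharp n A * NE + B * DE) := by
    refine hcop.add_mul_of_isCoprime_det ?_
    rw [hdet, isCoprime_mul_unit_left_left (isUnit_C.mpr hd.isUnit)]
    exact (isCoprime_X_of_eval_zero_ne_zero hD0).pow_left
  exact ⟨hcopf.not_eval_eq_zero_and_eval_eq_zero, hcopf⟩

/-- if `N_E, D_E` are coprime with `D_E(0) ≠ 0`, then
`N_f = z·B_n^{♯n}·N_E + A_n·D_E` and `D_f = z·A_n^{♯n}·N_E + B_n·D_E` have no common
zero in `ℂ`; equivalently they are coprime in `ℂ[z]`, so `N_f/D_f` is a coprime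
representation of the image of `E = N_E/D_E` under the linear fractional transformation. -/
theorem stmt_7 (n : ℕ) (hn : 1 ≤ n) (γ : ℕ → ℂ)
    (hγ : ∀ j ≤ n, ‖γ j‖ < 1)
    (NE DE : Polynomial ℂ) (hcop : IsCoprime NE DE) (hDE0 : DE.eval 0 ≠ 0) :
    (∀ z : ℂ, ¬((X * sharp n (schurAB γ n n).2 * NE + (schurAB γ n n).1 * DE).eval z = 0 ∧
        (X * sharp n (schurAB γ n n).1 * NE + (schurAB γ n n).2 * DE).eval z = 0)) ∧
    IsCoprime (X * sharp n (schurAB γ n n).2 * NE + (schurAB γ n n).1 * DE)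
      (X * sharp n (schurAB γ n n).1 * NE + (schurAB γ n n).2 * DE) :=
  stmt_7_general n γ hγ NE DE hcop hDE0
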